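/- Let (U₀, U₁) be bivariate normal with standard N(0,1) marginals and correlation ρ ∈ (-1,1). Then max(U₀, U₁) has the scalar skew normal distribution SN(0, 1, α) with α = √((1-ρ)/(1+ρ)), i.e. max(U₀,U₁) has density 2 φ(x) Φ(α x). -/

import Mathlib

open MeasureTheory ProbabilityTheory Real
open scoped NNReal ENNReal

/-- The standard normal cumulative distribution function. -/
noncomputable def stdNormalCDF (x : ℝ) : ℝ := (gaussianReal 0 1 (Set.Iic x)).toReal

/-- The standard normal density. -/
noncomputable def stdNormalPDF (x : ℝ) : ℝ := (2 * π) ^ (-(1 : ℝ) / 2) * Real.exp (-x ^ 2 / 2)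

lemma stdNormalPDF_nonneg (x : ℝ) : 0 ≤ stdNormalPDF x := by
  unfold stdNormalPDF
  positivity

lemma stdNormalCDF_monotone : Monotone stdNormalCDF := fun a b hab =>
  ENNReal.toReal_mono (measure_ne_top _ _) (measure_mono (Set.Iic_subset_Iic.2 hab))

lemma inner_int (ρ : ℝ) (hρ : ρ ∈ Set.Ioo (-1 : ℝ) 1) (x : ℝ) :
    ∫⁻ y in Set.Iic x, ENNReal.ofReal ((2 * π * Real.sqrt (1 - ρ ^ 2))⁻¹ *
        Real.exp (-(x ^ 2 - 2 * ρ * x * y + y ^ 2) / (2 * (1 - ρ ^ 2))))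
      = ENNReal.ofReal (stdNormalPDF x * stdNormalCDF (Real.sqrt ((1 - ρ) / (1 + ρ)) * x)) := by
  obtain ⟨hρl, hρr⟩ := hρ
  have hρ1 : (0:ℝ) < 1 - ρ := by linarith
  have hρ2 : (0:ℝ) < 1 + ρ := by linarith
  have hv : (0:ℝ) < 1 - ρ ^ 2 := by nlinarith
  set V : ℝ≥0 := ⟨1 - ρ ^ 2, hv.le⟩ with hVdef
  have hV : V ≠ 0 := by
    simp only [ne_eq, ← NNReal.coe_eq_zero]
    exact hv.ne'
  have h2π : (0:ℝ) < 2 * π := by positivity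
  have hφ : 0 ≤ stdNormalPDF x := stdNormalPDF_nonneg x
  have hsv : 0 < Real.sqrt (1 - ρ ^ 2) := Real.sqrt_pos.2 hv
  have key : ∀ y : ℝ, stdNormalPDF x * gaussianPDFReal (ρ * x) V y
      = (2 * π * Real.sqrt (1 - ρ ^ 2))⁻¹ *
        Real.exp (-(x ^ 2 - 2 * ρ * x * y + y ^ 2) / (2 * (1 - ρ ^ 2))) := by
    intro y
    unfold stdNormalPDF gaussianPDFReal
    have hc : ((V : ℝ)) = 1 - ρ ^ 2 := rfl
    rw [hc]
    have h1 : (2 * π) ^ (-(1:ℝ) / 2) = (Real.sqrt (2 * π))⁻¹ := by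
      rw [Real.sqrt_eq_rpow, ← Real.rpow_neg h2π.le, neg_div]
    rw [h1, mul_mul_mul_comm, ← Real.exp_add]
    congr 1
    · rw [← mul_inv, ← Real.sqrt_mul h2π.le,
        show 2 * π * (2 * π * (1 - ρ ^ 2)) = (2 * π) ^ 2 * (1 - ρ ^ 2) by ring,
        Real.sqrt_mul (sq_nonneg _), Real.sqrt_sq h2π.le]
    · congr 1
      field_simp
      ring
  have hmapg : gaussianReal (ρ * x) V
      = (gaussianReal 0 1).map (fun y => Real.sqrt (1 - ρ ^ 2) * y + ρ * x) := by
    have h1 : (gaussianReal 0 1).map (Real.sqrt (1 - ρ ^ 2) * ·) = gaussianReal 0 V := by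
      rw [gaussianReal_map_const_mul]
      congr 1
      · ring
      · apply NNReal.coe_injective
        push_cast
        rw [Real.sq_sqrt hv.le]
        simp [hVdef]
        rfl
    have h2 : (fun y => Real.sqrt (1 - ρ ^ 2) * y + ρ * x)
        = (· + ρ * x) ∘ (Real.sqrt (1 - ρ ^ 2) * ·) := rfl
    rw [h2, ← Measure.map_map (measurable_add_const _) (measurable_const_mul _), h1,
      gaussianReal_map_add_const, zero_add]
  have hα : Real.sqrt ((1 - ρ) / (1 + ρ)) * x * Real.sqrt (1 - ρ ^ 2) = x - ρ * x := by
    have h3 : Real.sqrt ((1 - ρ) / (1 + ρ)) * Real.sqrt (1 - ρ ^ 2) = 1 - ρ := by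
      rw [← Real.sqrt_mul (by positivity),
        show (1 - ρ) / (1 + ρ) * (1 - ρ ^ 2) = (1 - ρ) ^ 2 by field_simp; ring,
        Real.sqrt_sq hρ1.le]
    calc Real.sqrt ((1 - ρ) / (1 + ρ)) * x * Real.sqrt (1 - ρ ^ 2)
        = (Real.sqrt ((1 - ρ) / (1 + ρ)) * Real.sqrt (1 - ρ ^ 2)) * x := by ring
      _ = (1 - ρ) * x := by rw [h3]
      _ = x - ρ * x := by ring
  have happ : gaussianReal (ρ * x) V (Set.Iic x)
      = gaussianReal 0 1 (Set.Iic (Real.sqrt ((1 - ρ) / (1 + ρ)) * x)) := by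
    rw [hmapg, Measure.map_apply (by fun_prop) measurableSet_Iic]
    congr 1
    ext y
    simp only [Set.mem_preimage, Set.mem_Iic]
    constructor
    · intro h
      nlinarith [mul_le_mul_of_nonneg_left
        (show y ≤ (Real.sqrt ((1 - ρ) / (1 + ρ)) * x) from by nlinarith) hsv.le]
    · intro h
      nlinarith [mul_le_mul_of_nonneg_left h hsv.le]
  calc ∫⁻ y in Set.Iic x, ENNReal.ofReal ((2 * π * Real.sqrt (1 - ρ ^ 2))⁻¹ *
        Real.exp (-(x ^ 2 - 2 * ρ * x * y + y ^ 2) / (2 * (1 - ρ ^ 2))))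
      = ∫⁻ y in Set.Iic x, ENNReal.ofReal (stdNormalPDF x) * gaussianPDF (ρ * x) V y := by
        refine setLIntegral_congr_fun measurableSet_Iic (fun y _ => ?_)
        rw [gaussianPDF, ← ENNReal.ofReal_mul hφ, key y]
    _ = ENNReal.ofReal (stdNormalPDF x) * ∫⁻ y in Set.Iic x, gaussianPDF (ρ * x) V y :=
        lintegral_const_mul _ (measurable_gaussianPDF _ _)
    _ = ENNReal.ofReal (stdNormalPDF x) * gaussianReal (ρ * x) V (Set.Iic x) := by
        rw [gaussianReal_apply _ hV]
    _ = ENNReal.ofReal (stdNormalPDF x) *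
          ENNReal.ofReal (stdNormalCDF (Real.sqrt ((1 - ρ) / (1 + ρ)) * x)) := by
        rw [happ]
        unfold stdNormalCDF
        rw [ENNReal.ofReal_toReal (measure_ne_top _ _)]
    _ = ENNReal.ofReal (stdNormalPDF x * stdNormalCDF (Real.sqrt ((1 - ρ) / (1 + ρ)) * x)) :=
        (ENNReal.ofReal_mul hφ).symm

/-- if (U₀, U₁) is bivariate normal with standard marginals and
correlation ρ, then max(U₀, U₁) has the skew normal density 2 φ(x) Φ(αx) with
α = √((1-ρ)/(1+ρ)). -/
theorem stmt_10 {Ω : Type*} [MeasureSpace Ω] [IsProbabilityMeasure (ℙ : Measure Ω)]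
    (ρ : ℝ) (hρ : ρ ∈ Set.Ioo (-1 : ℝ) 1)
    (U₀ U₁ : Ω → ℝ) (hU₀ : Measurable U₀) (hU₁ : Measurable U₁)
    (hjoint : Measure.map (fun ω => (U₀ ω, U₁ ω)) ℙ
      = (volume : Measure (ℝ × ℝ)).withDensity (fun p => ENNReal.ofReal
          ((2 * π * Real.sqrt (1 - ρ ^ 2))⁻¹ *
            Real.exp (-(p.1 ^ 2 - 2 * ρ * p.1 * p.2 + p.2 ^ 2) / (2 * (1 - ρ ^ 2)))))) :
    Measure.map (fun ω => max (U₀ ω) (U₁ ω)) ℙ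
      = volume.withDensity (fun x => ENNReal.ofReal
          (2 * stdNormalPDF x * stdNormalCDF (Real.sqrt ((1 - ρ) / (1 + ρ)) * x))) := by
  set f : ℝ × ℝ → ℝ≥0∞ := fun p => ENNReal.ofReal
      ((2 * π * Real.sqrt (1 - ρ ^ 2))⁻¹ *
        Real.exp (-(p.1 ^ 2 - 2 * ρ * p.1 * p.2 + p.2 ^ 2) / (2 * (1 - ρ ^ 2)))) with hf
  set g₁ : ℝ → ℝ≥0∞ := fun x => ENNReal.ofReal
      (stdNormalPDF x * stdNormalCDF (Real.sqrt ((1 - ρ) / (1 + ρ)) * x)) with hg₁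
  have hfm : Measurable f := by
    apply Measurable.ennreal_ofReal
    fun_prop
  have hg₁m : Measurable g₁ := by
    apply Measurable.ennreal_ofReal
    apply Measurable.mul
    · unfold stdNormalPDF; fun_prop
    · exact stdNormalCDF_monotone.measurable.comp (measurable_const_mul _)
  have hm : Measurable (fun p : ℝ × ℝ => max p.1 p.2) := measurable_fst.max measurable_snd
  have hmap : Measure.map (fun ω => max (U₀ ω) (U₁ ω)) ℙ
      = Measure.map (fun p : ℝ × ℝ => max p.1 p.2) (volume.withDensity f) := by
    rw [← hjoint, Measure.map_map hm (hU₀.prodMk hU₁)]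
    rfl
  have hprob : IsProbabilityMeasure
      (Measure.map (fun p : ℝ × ℝ => max p.1 p.2) (volume.withDensity f)) := by
    rw [← hmap]; exact Measure.isProbabilityMeasure_map (hU₀.max hU₁).aemeasurable
  rw [hmap]
  have hinner : ∀ x : ℝ, ∫⁻ y in Set.Iic x, f (x, y) = g₁ x := fun x => inner_int ρ hρ x
  have hsymm : ∀ x y : ℝ, f (x, y) = f (y, x) := by
    intro x y
    simp only [hf]
    ring_nf
  refine Measure.ext_of_Iic _ _ fun t => ?_
  rw [Measure.map_apply hm measurableSet_Iic]
  have hpre : (fun p : ℝ × ℝ => max p.1 p.2) ⁻¹' Set.Iic t = Set.Iic t ×ˢ Set.Iic t := by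
    ext p
    simp [max_le_iff, Set.mem_prod, Prod.le_def]
  rw [hpre, withDensity_apply _ (measurableSet_Iic.prod measurableSet_Iic),
    withDensity_apply _ measurableSet_Iic]
  set S₁ : Set (ℝ × ℝ) := {p | p.1 ≤ t ∧ p.2 ≤ p.1} with hS₁def
  set S₂ : Set (ℝ × ℝ) := {p | p.2 ≤ t ∧ p.1 < p.2} with hS₂def
  have hS₁ : MeasurableSet S₁ :=
    (measurableSet_le measurable_fst measurable_const).inter
      (measurableSet_le measurable_snd measurable_fst)
  have hS₂ : MeasurableSet S₂ :=
    (measurableSet_le measurable_snd measurable_const).inter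
      (measurableSet_lt measurable_fst measurable_snd)
  have hunion : Set.Iic t ×ˢ Set.Iic t = S₁ ∪ S₂ := by
    ext p
    simp only [Set.mem_prod, Set.mem_Iic, Set.mem_union, Set.mem_setOf_eq, hS₁def, hS₂def]
    constructor
    · rintro ⟨h1, h2⟩
      rcases le_or_gt p.2 p.1 with h | h
      exacts [Or.inl ⟨h1, h⟩, Or.inr ⟨h2, h⟩]
    · rintro (⟨h1, h2⟩ | ⟨h1, h2⟩)
      exacts [⟨h1, h2.trans h1⟩, ⟨h2.le.trans h1, h1⟩]
  have hdisj : Disjoint S₁ S₂ := by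
    rw [Set.disjoint_left]
    rintro p ⟨_, h2⟩ ⟨_, h4⟩
    exact absurd h2 (not_le.mpr h4)
  rw [hunion, lintegral_union hS₂ hdisj]
  have hL1 : ∫⁻ p in S₁, f p ∂volume = ∫⁻ x in Set.Iic t, g₁ x := by
    rw [← lintegral_indicator hS₁, Measure.volume_eq_prod,
      lintegral_prod _ ((hfm.indicator hS₁).aemeasurable), ← lintegral_indicator measurableSet_Iic]
    congr 1
    ext x
    by_cases hx : x ≤ t
    · rw [Set.indicator_of_mem (Set.mem_Iic.mpr hx), ← hinner x,
        ← lintegral_indicator measurableSet_Iic]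
      congr 1
      ext y
      by_cases hy : y ≤ x
      · rw [Set.indicator_of_mem (show (x, y) ∈ S₁ from ⟨hx, hy⟩),
          Set.indicator_of_mem (Set.mem_Iic.mpr hy)]
      · rw [Set.indicator_of_notMem (show (x, y) ∉ S₁ from fun h => hy h.2),
          Set.indicator_of_notMem (by simpa using hy)]
    · rw [Set.indicator_of_notMem (by simpa using hx)]
      have hz : ∀ y : ℝ, S₁.indicator f (x, y) = 0 := fun y =>
        Set.indicator_of_notMem (fun h => hx h.1) _
      simp [hz]
  have hL2 : ∫⁻ p in S₂, f p ∂volume = ∫⁻ x in Set.Iic t, g₁ x := by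
    rw [← lintegral_indicator hS₂, Measure.volume_eq_prod,
      lintegral_prod_symm _ ((hfm.indicator hS₂).aemeasurable),
      ← lintegral_indicator measurableSet_Iic]
    congr 1
    ext y
    by_cases hy : y ≤ t
    · rw [Set.indicator_of_mem (Set.mem_Iic.mpr hy), ← hinner y,
        ← setLIntegral_congr (Iio_ae_eq_Iic (a := y) (μ := volume)),
        ← lintegral_indicator measurableSet_Iio]
      congr 1
      ext x
      by_cases hxy : x < y
      · rw [Set.indicator_of_mem (show (x, y) ∈ S₂ from ⟨hy, hxy⟩),
          Set.indicator_of_mem (Set.mem_Iio.mpr hxy), hsymm]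
      · rw [Set.indicator_of_notMem (show (x, y) ∉ S₂ from fun h => hxy h.2),
          Set.indicator_of_notMem (by simpa using hxy)]
    · rw [Set.indicator_of_notMem (by simpa using hy)]
      have hz : ∀ x : ℝ, S₂.indicator f (x, y) = 0 := fun x =>
        Set.indicator_of_notMem (fun h => hy h.1) _
      simp [hz]
  rw [hL1, hL2, ← lintegral_add_left hg₁m]
  refine setLIntegral_congr_fun measurableSet_Iic (fun x _ => ?_)
  have hnn : 0 ≤ stdNormalPDF x * stdNormalCDF (Real.sqrt ((1 - ρ) / (1 + ρ)) * x) :=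
    mul_nonneg (stdNormalPDF_nonneg x) ENNReal.toReal_nonneg
  simp only [hg₁, Pi.add_apply, ← ENNReal.ofReal_add hnn hnn]
  congr 1
  ring
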